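/- arXiv:1311.5464 — 4 statements merged into one kernel-verified Lean document; each statement's English description precedes it below -/
import Mathlib

section
/- Let λ₀, λ₁ > 0 and let a₀, a₁ : [0,∞) → ℝ be continuously differentiable with a₀(0) = a₁(0) = 0. Suppose μ₀, μ₁ : [0,∞) → ℝ are continuous and satisfy the Volterra system μ₀(t) = a₀(t) + ∫₀ᵗ μ₁(t-u) λ₀ e^{-λ₀ u} du and μ₁(t) = a₁(t) + ∫₀ᵗ μ₀(t-u) λ₁ e^{-λ₁ u} du for all t ≥ 0. Then μ₀ and μ₁ are differentiable and the vector μ = (μ₀, μ₁) satisfies μ(0) = 0 and μ'(t) = Λ·μ(t) + ψ(t) for all t ≥ 0, where Λ = [[-λ₀, λ₀], [λ₁, -λ₁]] and ψᵢ(t) = aᵢ'(t) + λᵢ aᵢ(t) for i = 0, 1. -/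
open Matrix MeasureTheory

lemma volterra_row (l : ℝ) (a a' ν μ : ℝ → ℝ)
    (ha : ∀ t ∈ Set.Ici (0:ℝ), HasDerivWithinAt a (a' t) (Set.Ici 0) t)
    (hν : ContinuousOn ν (Set.Ici 0))
    (heq : ∀ t ≥ (0:ℝ), μ t = a t + ∫ u in (0:ℝ)..t, ν (t - u) * (l * Real.exp (-l * u))) :
    ∀ t ≥ (0:ℝ), HasDerivWithinAt μ (-l * μ t + l * ν t + (a' t + l * a t)) (Set.Ici 0) t := by
  set h : ℝ → ℝ := fun v => ν (max v 0) * Real.exp (l * v) with hh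
  have hcont : Continuous h := by
    exact (hν.comp_continuous (continuous_id.max continuous_const)
      (fun x => Set.mem_Ici.mpr (le_max_right _ _))).mul (Real.continuous_exp.comp (continuous_const.mul continuous_id))
  set G : ℝ → ℝ := fun t => ∫ v in (0:ℝ)..t, h v with hG
  have key : ∀ t ≥ (0:ℝ), μ t = a t + l * Real.exp (-l * t) * G t := by
    intro t ht
    rw [heq t ht]
    congr 1
    have h1 : (∫ u in (0:ℝ)..t, ν (t - u) * (l * Real.exp (-l * u)))
        = ∫ u in (0:ℝ)..t, (fun v => ν v * (l * Real.exp (-l * (t - v)))) (t - u) := by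
      apply intervalIntegral.integral_congr
      intro u hu
      simp only []
      rw [show t - (t - u) = u by ring]
    rw [h1, intervalIntegral.integral_comp_sub_left (fun v => ν v * (l * Real.exp (-l * (t - v)))) t, sub_self, sub_zero]
    have h2 : ∀ v ∈ Set.uIcc (0:ℝ) t,
        ν v * (l * Real.exp (-l * (t - v))) = (l * Real.exp (-l * t)) * h v := by
      intro v hv
      rw [Set.uIcc_of_le ht] at hv
      rw [hh]
      simp only []
      rw [max_eq_left hv.1, show -l * (t - v) = -l * t + l * v by ring, Real.exp_add]
      ring
    rw [intervalIntegral.integral_congr h2, intervalIntegral.integral_const_mul]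
  intro t ht
  have hGd : HasDerivWithinAt G (h t) (Set.Ici 0) t :=
    (hcont.integral_hasStrictDerivAt 0 t).hasDerivAt.hasDerivWithinAt
  have hexpd : HasDerivWithinAt (fun s => Real.exp (-l * s))
      (Real.exp (-l * t) * (-l)) (Set.Ici 0) t :=
    (by simpa using (((hasDerivAt_id t).const_mul (-l)).exp.hasDerivWithinAt (s := Set.Ici 0)) : _)
  have hE : HasDerivWithinAt (fun s => a s + l * Real.exp (-l * s) * G s)
      (a' t + ((l * (Real.exp (-l * t) * (-l))) * G t + (l * Real.exp (-l * t)) * h t))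
      (Set.Ici 0) t := (ha t ht).add ((hexpd.const_mul l).mul hGd)
  have hμd := hE.congr (fun y hy => key y hy) (key t ht)
  refine hμd.congr_deriv ?_
  have hht : h t = ν t * Real.exp (l * t) := by
    rw [hh]; simp only []; rw [max_eq_left ht]
  have hexp : Real.exp (-l * t) * Real.exp (l * t) = 1 := by
    rw [← Real.exp_add]; norm_num
  rw [key t ht, hht]
  linear_combination (l * ν t) * hexp

theorem volterra_to_ode (l0 l1 : ℝ) (hl0 : 0 < l0) (hl1 : 0 < l1)
    (a0 a1 a0' a1' : ℝ → ℝ)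
    (ha0 : ∀ t ∈ Set.Ici (0:ℝ), HasDerivWithinAt a0 (a0' t) (Set.Ici 0) t)
    (ha1 : ∀ t ∈ Set.Ici (0:ℝ), HasDerivWithinAt a1 (a1' t) (Set.Ici 0) t)
    (ha0' : ContinuousOn a0' (Set.Ici 0)) (ha1' : ContinuousOn a1' (Set.Ici 0))
    (ha00 : a0 0 = 0) (ha10 : a1 0 = 0)
    (μ0 μ1 : ℝ → ℝ)
    (hμ0c : ContinuousOn μ0 (Set.Ici 0)) (hμ1c : ContinuousOn μ1 (Set.Ici 0))
    (heq0 : ∀ t ≥ (0:ℝ),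
      μ0 t = a0 t + ∫ u in (0:ℝ)..t, μ1 (t - u) * (l0 * Real.exp (-l0 * u)))
    (heq1 : ∀ t ≥ (0:ℝ),
      μ1 t = a1 t + ∫ u in (0:ℝ)..t, μ0 (t - u) * (l1 * Real.exp (-l1 * u))) :
    (fun s => (![μ0 s, μ1 s] : Fin 2 → ℝ)) 0 = 0 ∧
      ∀ t ≥ (0:ℝ),
        HasDerivWithinAt (fun s => (![μ0 s, μ1 s] : Fin 2 → ℝ))
          ((!![-l0, l0; l1, -l1] : Matrix (Fin 2) (Fin 2) ℝ) *ᵥ ![μ0 t, μ1 t]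
            + ![a0' t + l0 * a0 t, a1' t + l1 * a1 t]) (Set.Ici 0) t := by
  have hrow0 := volterra_row l0 a0 a0' μ1 μ0 ha0 hμ1c heq0
  have hrow1 := volterra_row l1 a1 a1' μ0 μ1 ha1 hμ0c heq1
  constructor
  · have h0 : μ0 0 = 0 := by simpa [ha00] using heq0 0 le_rfl
    have h1 : μ1 0 = 0 := by simpa [ha10] using heq1 0 le_rfl
    funext i
    fin_cases i <;> simp [h0, h1]
  · intro t ht
    rw [hasDerivWithinAt_pi]
    intro i
    fin_cases i
    · refine (hrow0 t ht).congr_deriv ?_ <;>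
        simp [Matrix.mulVec, dotProduct, Fin.sum_univ_two] <;> ring
    · refine (hrow1 t ht).congr_deriv ?_ <;>
        simp [Matrix.mulVec, dotProduct, Fin.sum_univ_two] <;> ring
end

section
/- Let λ₀, λ₁ > 0, set 2λ = λ₀ + λ₁ and φ_λ(t) = (1 - e^{-2λt})/(2λ), let Λ = [[-λ₀, λ₀], [λ₁, -λ₁]] and L = [[0, λ₀], [λ₁, 0]]. Let a = (a₀, a₁) : [0,∞) → ℝ² be continuously differentiable with a(0) = 0, and define μ(t) = a(t) + ∫₀ᵗ (I + φ_λ(t-u)·Λ)·L·a(u) du. Then the components μ₀, μ₁ of μ satisfy the Volterra system μ₀(t) = a₀(t) + ∫₀ᵗ μ₁(t-u) λ₀ e^{-λ₀ u} du and μ₁(t) = a₁(t) + ∫₀ᵗ μ₀(t-u) λ₁ e^{-λ₁ u} du for all t ≥ 0. -/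
open Matrix MeasureTheory

section Aux

open intervalIntegral

lemma aux_hasDerivAt_expc (r x : ℝ) :
    HasDerivAt (fun y => Real.exp (r*y)) (r * Real.exp (r*x)) x := by
  exact ((Real.hasDerivAt_exp (r*x)).comp x ((hasDerivAt_id x).const_mul r)).congr_deriv
    (by simp [mul_comm])

lemma aux_prim_hasDerivAt (f : ℝ → ℝ) (hf : Continuous f) (x : ℝ) :
    HasDerivAt (fun t => ∫ u in (0:ℝ)..t, f u) (f x) x :=
  (hf.integral_hasStrictDerivAt 0 x).hasDerivAt

lemma aux_prim_continuous (f : ℝ → ℝ) (hf : Continuous f) :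
    Continuous (fun t => ∫ u in (0:ℝ)..t, f u) :=
  continuous_iff_continuousAt.2 fun x => (aux_prim_hasDerivAt f hf x).continuousAt

lemma aux_ibp1 (p : ℝ) (hp : 0 < p) (h : ℝ → ℝ) (hh : Continuous h) (t : ℝ) :
    (∫ x in (0:ℝ)..t, (∫ v in (0:ℝ)..x, h v) * Real.exp (p*x))
      = (∫ v in (0:ℝ)..t, h v) * Real.exp (p*t) / p
        - (∫ x in (0:ℝ)..t, h x * Real.exp (p*x)) / p := by
  have hv : ∀ x ∈ Set.uIcc (0:ℝ) t,
      HasDerivAt (fun y => Real.exp (p*y) / p) (Real.exp (p*x)) x := by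
    intro x _
    have := (aux_hasDerivAt_expc p x).div_const p
    simpa [mul_div_assoc, mul_div_cancel_left₀ _ hp.ne'] using this
  have := integral_mul_deriv_eq_deriv_mul
    (u := fun x => ∫ v in (0:ℝ)..x, h v) (u' := h)
    (v := fun y => Real.exp (p*y) / p) (v' := fun x => Real.exp (p*x))
    (fun x _ => aux_prim_hasDerivAt h hh x) hv
    (hh.intervalIntegrable 0 t)
    ((Real.continuous_exp.comp (continuous_const.mul continuous_id)).intervalIntegrable 0 t)
  rw [this]
  simp [integral_same]
  rw [show (∫ (x : ℝ) in (0:ℝ)..t, h x * (Real.exp (p * x) / p))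
      = (∫ (x : ℝ) in (0:ℝ)..t, h x * Real.exp (p * x)) / p by
    simp_rw [← mul_div_assoc, intervalIntegral.integral_div]]
  ring

lemma aux_ibp2 (p q : ℝ) (hq : 0 < q) (h : ℝ → ℝ) (hh : Continuous h) (t : ℝ) :
    (∫ x in (0:ℝ)..t, (∫ v in (0:ℝ)..x, Real.exp ((p+q)*v) * h v) * Real.exp (-q*x))
      = -((∫ v in (0:ℝ)..t, Real.exp ((p+q)*v) * h v) * Real.exp (-q*t)) / q
        + (∫ x in (0:ℝ)..t, h x * Real.exp (p*x)) / q := by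
  have hint : Continuous (fun v => Real.exp ((p+q)*v) * h v) :=
    (Real.continuous_exp.comp (continuous_const.mul continuous_id)).mul hh
  have hv : ∀ x ∈ Set.uIcc (0:ℝ) t,
      HasDerivAt (fun y => -(Real.exp (-q*y) / q)) (Real.exp (-q*x)) x := by
    intro x _
    have := ((aux_hasDerivAt_expc (-q) x).div_const q).neg
    have hq' : q ≠ 0 := hq.ne'
    exact this.congr_deriv (by rw [neg_mul, neg_div, neg_neg, mul_div_cancel_left₀ _ hq'])
  have := integral_mul_deriv_eq_deriv_mul
    (u := fun x => ∫ v in (0:ℝ)..x, Real.exp ((p+q)*v) * h v)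
    (u' := fun v => Real.exp ((p+q)*v) * h v)
    (v := fun y => -(Real.exp (-q*y) / q)) (v' := fun x => Real.exp (-q*x))
    (fun x _ => aux_prim_hasDerivAt _ hint x) hv
    (hint.intervalIntegrable 0 t)
    ((Real.continuous_exp.comp (continuous_const.mul continuous_id)).intervalIntegrable 0 t)
  rw [this]
  simp only [integral_same, zero_mul, sub_zero]
  have hee : ∀ x : ℝ, Real.exp ((p+q)*x) * h x * -(Real.exp (-q*x) / q)
      = -(h x * Real.exp (p*x)) / q := by
    intro x
    rw [show Real.exp (p*x) = Real.exp ((p+q)*x) * Real.exp (-q*x) by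
      rw [← Real.exp_add]; ring_nf]
    ring
  simp_rw [hee]
  rw [intervalIntegral.integral_div, intervalIntegral.integral_neg]
  ring

lemma aux_key (p q : ℝ) (hp : 0 < p) (hq : 0 < q) (f g : ℝ → ℝ)
    (hf : Continuous f) (hg : Continuous g) (t : ℝ) :
    (∫ u in (0:ℝ)..t,
      (g (t-u) + p*q/(p+q) * (∫ v in (0:ℝ)..(t-u), (f v + g v))
        + q/(p+q) * Real.exp (-(p+q)*(t-u)) *
          (q * (∫ v in (0:ℝ)..(t-u), Real.exp ((p+q)*v) * f v)
           - p * (∫ v in (0:ℝ)..(t-u), Real.exp ((p+q)*v) * g v)))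
       * (p * Real.exp (-p*u)))
    = p*q/(p+q) * (∫ v in (0:ℝ)..t, (f v + g v))
      - p/(p+q) * Real.exp (-(p+q)*t) *
        (q * (∫ v in (0:ℝ)..t, Real.exp ((p+q)*v) * f v)
         - p * (∫ v in (0:ℝ)..t, Real.exp ((p+q)*v) * g v)) := by
  have hc : (0:ℝ) < p + q := by linarith
  have hfg : Continuous (fun v => f v + g v) := hf.add hg
  have hef : Continuous (fun v => Real.exp ((p+q)*v) * f v) :=
    (Real.continuous_exp.comp (continuous_const.mul continuous_id)).mul hf
  have heg : Continuous (fun v => Real.exp ((p+q)*v) * g v) :=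
    (Real.continuous_exp.comp (continuous_const.mul continuous_id)).mul hg
  have hP : Continuous (fun x => ∫ v in (0:ℝ)..x, (f v + g v)) := aux_prim_continuous _ hfg
  have hBf : Continuous (fun x => ∫ v in (0:ℝ)..x, Real.exp ((p+q)*v) * f v) :=
    aux_prim_continuous _ hef
  have hBg : Continuous (fun x => ∫ v in (0:ℝ)..x, Real.exp ((p+q)*v) * g v) :=
    aux_prim_continuous _ heg
  have hexp : ∀ r : ℝ, Continuous (fun x : ℝ => Real.exp (r*x)) :=
    fun r => Real.continuous_exp.comp (continuous_const.mul continuous_id)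
  have step1 : (∫ u in (0:ℝ)..t,
      (g (t-u) + p*q/(p+q) * (∫ v in (0:ℝ)..(t-u), (f v + g v))
        + q/(p+q) * Real.exp (-(p+q)*(t-u)) *
          (q * (∫ v in (0:ℝ)..(t-u), Real.exp ((p+q)*v) * f v)
           - p * (∫ v in (0:ℝ)..(t-u), Real.exp ((p+q)*v) * g v)))
       * (p * Real.exp (-p*u)))
      = ∫ x in (0:ℝ)..t,
      (g x + p*q/(p+q) * (∫ v in (0:ℝ)..x, (f v + g v))
        + q/(p+q) * Real.exp (-(p+q)*x) *
          (q * (∫ v in (0:ℝ)..x, Real.exp ((p+q)*v) * f v)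
           - p * (∫ v in (0:ℝ)..x, Real.exp ((p+q)*v) * g v)))
       * (p * Real.exp (-p*(t-x))) := by
    have h := intervalIntegral.integral_comp_sub_left (a := (0:ℝ)) (b := t)
      (fun x => (g x + p*q/(p+q) * (∫ v in (0:ℝ)..x, (f v + g v))
        + q/(p+q) * Real.exp (-(p+q)*x) *
          (q * (∫ v in (0:ℝ)..x, Real.exp ((p+q)*v) * f v)
           - p * (∫ v in (0:ℝ)..x, Real.exp ((p+q)*v) * g v)))
       * (p * Real.exp (-p*(t-x)))) t
    simp only [sub_self, sub_zero] at h
    rw [← h]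
    apply intervalIntegral.integral_congr
    intro u hu
    simp only [sub_sub_cancel]
  rw [step1]
  have step2 : ∀ x : ℝ,
      (g x + p*q/(p+q) * (∫ v in (0:ℝ)..x, (f v + g v))
        + q/(p+q) * Real.exp (-(p+q)*x) *
          (q * (∫ v in (0:ℝ)..x, Real.exp ((p+q)*v) * f v)
           - p * (∫ v in (0:ℝ)..x, Real.exp ((p+q)*v) * g v)))
       * (p * Real.exp (-p*(t-x)))
      = (p * Real.exp (-p*t)) * (g x * Real.exp (p*x))
        + (p*q/(p+q) * (p * Real.exp (-p*t))) * ((∫ v in (0:ℝ)..x, (f v + g v)) * Real.exp (p*x))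
        + (q/(p+q) * (p * Real.exp (-p*t))) *
            (q * ((∫ v in (0:ℝ)..x, Real.exp ((p+q)*v) * f v) * Real.exp (-q*x))
             - p * ((∫ v in (0:ℝ)..x, Real.exp ((p+q)*v) * g v) * Real.exp (-q*x))) := by
    intro x
    have e1 : Real.exp (-p*(t-x)) = Real.exp (-p*t) * Real.exp (p*x) := by
      rw [← Real.exp_add]; ring_nf
    have e2 : Real.exp (-(p+q)*x) * Real.exp (p*x) = Real.exp (-q*x) := by
      rw [← Real.exp_add]; ring_nf
    rw [e1, ← e2]
    ring
  simp_rw [step2]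
  rw [intervalIntegral.integral_add (Continuous.intervalIntegrable (by fun_prop) _ _)
        (Continuous.intervalIntegrable (by fun_prop) _ _),
      intervalIntegral.integral_add (Continuous.intervalIntegrable (by fun_prop) _ _)
        (Continuous.intervalIntegrable (by fun_prop) _ _),
      intervalIntegral.integral_const_mul, intervalIntegral.integral_const_mul,
      intervalIntegral.integral_const_mul]
  rw [intervalIntegral.integral_sub (Continuous.intervalIntegrable (by fun_prop) _ _)
        (Continuous.intervalIntegrable (by fun_prop) _ _),
      intervalIntegral.integral_const_mul, intervalIntegral.integral_const_mul]
  rw [aux_ibp1 p hp (fun v => f v + g v) hfg t, aux_ibp2 p q hq f hf t, aux_ibp2 p q hq g hg t]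
  have hsplit : (∫ x in (0:ℝ)..t, ((f x + g x) * Real.exp (p*x)))
      = (∫ x in (0:ℝ)..t, f x * Real.exp (p*x)) + ∫ x in (0:ℝ)..t, g x * Real.exp (p*x) := by
    rw [← intervalIntegral.integral_add (Continuous.intervalIntegrable (by fun_prop) _ _)
      (Continuous.intervalIntegrable (by fun_prop) _ _)]
    congr 1; ext x; ring
  rw [hsplit]
  rw [show -(p+q)*t = (-(p*t)) + (-(q*t)) by ring, Real.exp_add,
      show -p*t = -(p*t) by ring, show -q*t = -(q*t) by ring,
      Real.exp_neg, Real.exp_neg]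
  have h1 : Real.exp (p*t) ≠ 0 := Real.exp_ne_zero _
  have h2 : Real.exp (q*t) ≠ 0 := Real.exp_ne_zero _
  field_simp
  ring

lemma aux_pi_apply {f : ℝ → Fin 2 → ℝ} {a b : ℝ} (hf : IntervalIntegrable f volume a b)
    (i : Fin 2) : (∫ x in a..b, f x) i = ∫ x in a..b, f x i := by
  have := (ContinuousLinearMap.proj (R := ℝ) (φ := fun _ : Fin 2 => ℝ)
    i).intervalIntegral_comp_comm hf
  simpa using this.symm

lemma aux_expand_int (c : ℝ) (f0 f1 : ℝ → ℝ) (hf0 : Continuous f0) (hf1 : Continuous f1)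
    (r1 r2 r3 r4 E s : ℝ) :
    (∫ u in (0:ℝ)..s, (r1 * f0 u + r2 * f1 u
        + E * (r3 * (Real.exp (c*u) * f0 u) + r4 * (Real.exp (c*u) * f1 u))))
      = r1 * (∫ u in (0:ℝ)..s, f0 u) + r2 * (∫ u in (0:ℝ)..s, f1 u)
        + E * (r3 * (∫ u in (0:ℝ)..s, Real.exp (c*u) * f0 u)
               + r4 * (∫ u in (0:ℝ)..s, Real.exp (c*u) * f1 u)) := by
  rw [intervalIntegral.integral_add (Continuous.intervalIntegrable (by fun_prop) _ _)
        (Continuous.intervalIntegrable (by fun_prop) _ _),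
      intervalIntegral.integral_add (Continuous.intervalIntegrable (by fun_prop) _ _)
        (Continuous.intervalIntegrable (by fun_prop) _ _)]
  simp only [intervalIntegral.integral_const_mul]
  rw [intervalIntegral.integral_add (Continuous.intervalIntegrable (by fun_prop) _ _)
        (Continuous.intervalIntegrable (by fun_prop) _ _)]
  simp only [intervalIntegral.integral_const_mul]

lemma aux_eval0 (l0 l1 c : ℝ) (v : Fin 2 → ℝ) :
    ((1 + c • !![-l0, l0; l1, -l1]) *ᵥ (!![0, l0; l1, 0] *ᵥ v)) 0
      = l0 * v 1 + c * (l0*l1* v 0 - l0*l0* v 1) := by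
  simp [Matrix.mulVec, dotProduct, Fin.sum_univ_two, Matrix.one_apply]
  ring

lemma aux_eval1 (l0 l1 c : ℝ) (v : Fin 2 → ℝ) :
    ((1 + c • !![-l0, l0; l1, -l1]) *ᵥ (!![0, l0; l1, 0] *ᵥ v)) 1
      = l1 * v 0 + c * (l0*l1* v 1 - l1*l1* v 0) := by
  simp [Matrix.mulVec, dotProduct, Fin.sum_univ_two, Matrix.one_apply]
  ring

end Aux

theorem explicit_solution_volterra (l0 l1 : ℝ) (hl0 : 0 < l0) (hl1 : 0 < l1)
    (Λ L : Matrix (Fin 2) (Fin 2) ℝ)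
    (hΛ : Λ = !![-l0, l0; l1, -l1]) (hL : L = !![0, l0; l1, 0])
    (φ : ℝ → ℝ)
    (hφ : ∀ t, φ t = (1 - Real.exp (-(l0 + l1) * t)) / (l0 + l1))
    (a a' : ℝ → Fin 2 → ℝ)
    (ha : ∀ t ∈ Set.Ici (0:ℝ), HasDerivWithinAt a (a' t) (Set.Ici 0) t)
    (ha' : ContinuousOn a' (Set.Ici 0))
    (ha0 : a 0 = 0)
    (μ : ℝ → Fin 2 → ℝ)
    (hμ : ∀ t, μ t = a t + ∫ u in (0:ℝ)..t, ((1 : Matrix (Fin 2) (Fin 2) ℝ)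
        + φ (t - u) • Λ) *ᵥ (L *ᵥ a u)) :
    ∀ t ≥ (0:ℝ),
      μ t 0 = a t 0 + (∫ u in (0:ℝ)..t, μ (t - u) 1 * (l0 * Real.exp (-l0 * u))) ∧
      μ t 1 = a t 1 + (∫ u in (0:ℝ)..t, μ (t - u) 0 * (l1 * Real.exp (-l1 * u))) := by
  intro t ht
  have hc : (0:ℝ) < l0 + l1 := by linarith
  have haC : ContinuousOn a (Set.Ici 0) := fun x hx => (ha x hx).continuousWithinAt
  set b : ℝ → Fin 2 → ℝ := fun u => a (max u 0) with hbdef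
  have hbC : Continuous b :=
    haC.comp_continuous (continuous_id.max continuous_const) (fun x => Set.mem_Ici.2 (le_max_right _ _))
  have hb0C : Continuous (fun u => b u 0) := (continuous_apply 0).comp hbC
  have hb1C : Continuous (fun u => b u 1) := (continuous_apply 1).comp hbC
  have hba : ∀ u : ℝ, 0 ≤ u → b u = a u := by
    intro u hu
    rw [hbdef]
    simp [max_eq_left hu]
  have hφc : Continuous φ := by
    rw [show φ = fun s => (1 - Real.exp (-(l0 + l1) * s)) / (l0 + l1) from funext hφ]
    fun_prop
  -- expansion of μ
  have hexp : ∀ s : ℝ, 0 ≤ s →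
      (μ s 0 = b s 0 + l0*l1/(l0+l1) * (∫ v in (0:ℝ)..s, (b v 0 + b v 1))
          - l0/(l0+l1) * Real.exp (-(l0+l1)*s) *
            (l1 * (∫ v in (0:ℝ)..s, Real.exp ((l0+l1)*v) * b v 0)
             - l0 * (∫ v in (0:ℝ)..s, Real.exp ((l0+l1)*v) * b v 1)))
      ∧ (μ s 1 = b s 1 + l0*l1/(l0+l1) * (∫ v in (0:ℝ)..s, (b v 0 + b v 1))
          + l1/(l0+l1) * Real.exp (-(l0+l1)*s) *
            (l1 * (∫ v in (0:ℝ)..s, Real.exp ((l0+l1)*v) * b v 0)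
             - l0 * (∫ v in (0:ℝ)..s, Real.exp ((l0+l1)*v) * b v 1))) := by
    intro s hs
    have hGc : Continuous (fun u => ((1 : Matrix (Fin 2) (Fin 2) ℝ) + φ (s - u) • Λ)
        *ᵥ (L *ᵥ b u)) := by
      apply Continuous.matrix_mulVec
      · exact continuous_const.add ((hφc.comp (continuous_const.sub continuous_id)).smul
          continuous_const)
      · exact continuous_const.matrix_mulVec hbC
    have hIcongr : (∫ u in (0:ℝ)..s, ((1 : Matrix (Fin 2) (Fin 2) ℝ) + φ (s - u) • Λ)
          *ᵥ (L *ᵥ a u))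
        = ∫ u in (0:ℝ)..s, ((1 : Matrix (Fin 2) (Fin 2) ℝ) + φ (s - u) • Λ) *ᵥ (L *ᵥ b u) := by
      apply intervalIntegral.integral_congr
      intro u hu
      rw [Set.uIcc_of_le hs] at hu
      beta_reduce
      rw [show a u = b u from (hba u hu.1).symm]
    have hPsplit : (∫ v in (0:ℝ)..s, (b v 0 + b v 1))
        = (∫ v in (0:ℝ)..s, b v 0) + ∫ v in (0:ℝ)..s, b v 1 :=
      intervalIntegral.integral_add (hb0C.intervalIntegrable _ _) (hb1C.intervalIntegrable _ _)
    have habs : a s = b s := (hba s hs).symm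
    constructor
    · rw [hμ s, Pi.add_apply, hIcongr, aux_pi_apply (hGc.intervalIntegrable 0 s) 0]
      have hpt : ∀ u : ℝ, (((1 : Matrix (Fin 2) (Fin 2) ℝ) + φ (s - u) • Λ) *ᵥ (L *ᵥ b u)) 0
          = (l0*l1/(l0+l1)) * b u 0 + (l0 - l0*l0/(l0+l1)) * b u 1
            + Real.exp (-(l0+l1)*s) * ((-(l0*l1/(l0+l1))) * (Real.exp ((l0+l1)*u) * b u 0)
              + (l0*l0/(l0+l1)) * (Real.exp ((l0+l1)*u) * b u 1)) := by
        intro u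
        rw [hΛ, hL, aux_eval0, hφ (s-u),
          show -(l0+l1)*(s-u) = (-((l0+l1)*s)) + (l0+l1)*u by ring, Real.exp_add,
          show -(l0+l1)*s = -((l0+l1)*s) by ring]
        field_simp
        ring
      simp_rw [hpt]
      rw [aux_expand_int (l0+l1) (fun v => b v 0) (fun v => b v 1) hb0C hb1C _ _ _ _ _ s,
        hPsplit, habs]
      field_simp
      ring
    · rw [hμ s, Pi.add_apply, hIcongr, aux_pi_apply (hGc.intervalIntegrable 0 s) 1]
      have hpt : ∀ u : ℝ, (((1 : Matrix (Fin 2) (Fin 2) ℝ) + φ (s - u) • Λ) *ᵥ (L *ᵥ b u)) 1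
          = (l1 - l1*l1/(l0+l1)) * b u 0 + (l0*l1/(l0+l1)) * b u 1
            + Real.exp (-(l0+l1)*s) * ((l1*l1/(l0+l1)) * (Real.exp ((l0+l1)*u) * b u 0)
              + (-(l0*l1/(l0+l1))) * (Real.exp ((l0+l1)*u) * b u 1)) := by
        intro u
        rw [hΛ, hL, aux_eval1, hφ (s-u),
          show -(l0+l1)*(s-u) = (-((l0+l1)*s)) + (l0+l1)*u by ring, Real.exp_add,
          show -(l0+l1)*s = -((l0+l1)*s) by ring]
        field_simp
        ring
      simp_rw [hpt]
      rw [aux_expand_int (l0+l1) (fun v => b v 0) (fun v => b v 1) hb0C hb1C _ _ _ _ _ s,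
        hPsplit, habs]
      field_simp
      ring
  -- assemble
  have hb_at_t : b t = a t := hba t ht
  constructor
  · have K := aux_key l0 l1 hl0 hl1 (fun v => b v 0) (fun v => b v 1) hb0C hb1C t
    beta_reduce at K
    have hIeq : (∫ u in (0:ℝ)..t, μ (t - u) 1 * (l0 * Real.exp (-l0 * u)))
        = ∫ u in (0:ℝ)..t,
          (b (t-u) 1 + l0*l1/(l0+l1) * (∫ v in (0:ℝ)..(t-u), (b v 0 + b v 1))
            + l1/(l0+l1) * Real.exp (-(l0+l1)*(t-u)) *
              (l1 * (∫ v in (0:ℝ)..(t-u), Real.exp ((l0+l1)*v) * b v 0)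
               - l0 * (∫ v in (0:ℝ)..(t-u), Real.exp ((l0+l1)*v) * b v 1)))
           * (l0 * Real.exp (-l0*u)) := by
      apply intervalIntegral.integral_congr
      intro u hu
      rw [Set.uIcc_of_le ht] at hu
      have htu : (0:ℝ) ≤ t - u := by linarith [hu.2]
      beta_reduce
      rw [(hexp (t-u) htu).2]
    rw [hIeq, K, (hexp t ht).1, ← hb_at_t]
    ring
  · have K := aux_key l1 l0 hl1 hl0 (fun v => b v 1) (fun v => b v 0) hb1C hb0C t
    beta_reduce at K
    rw [add_comm l1 l0] at K
    have flip : ∀ s : ℝ, (∫ v in (0:ℝ)..s, (b v 1 + b v 0))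
        = ∫ v in (0:ℝ)..s, (b v 0 + b v 1) := by
      intro s
      apply intervalIntegral.integral_congr
      intro x _
      beta_reduce
      exact add_comm _ _
    simp only [flip] at K
    have hIeq : (∫ u in (0:ℝ)..t, μ (t - u) 0 * (l1 * Real.exp (-l1 * u)))
        = ∫ u in (0:ℝ)..t,
          (b (t-u) 0 + l1*l0/(l0+l1) * (∫ v in (0:ℝ)..(t-u), (b v 0 + b v 1))
            + l0/(l0+l1) * Real.exp (-(l0+l1)*(t-u)) *
              (l0 * (∫ v in (0:ℝ)..(t-u), Real.exp ((l0+l1)*v) * b v 1)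
               - l1 * (∫ v in (0:ℝ)..(t-u), Real.exp ((l0+l1)*v) * b v 0)))
           * (l1 * Real.exp (-l1*u)) := by
      apply intervalIntegral.integral_congr
      intro u hu
      rw [Set.uIcc_of_le ht] at hu
      have htu : (0:ℝ) ≤ t - u := by linarith [hu.2]
      beta_reduce
      rw [(hexp (t-u) htu).1]
      ring
    rw [hIeq, K, (hexp t ht).2, ← hb_at_t]
    ring
end

section
/- Let f₀, f₁ : [0,∞) → ℝ be nonnegative integrable continuous functions, let c̄₀, c̄₁, h₀, h₁ : [0,∞) → ℝ be continuous, let F̄ᵢ(t) = ∫ₜ^∞ fᵢ(u) du, and define aᵢ(t) = ∫₀ᵗ (F̄ᵢ(u) c̄ᵢ(u) + fᵢ(u) hᵢ(u)) du. Let μ₀, μ₁ : [0,∞) → ℝ be continuous functions satisfying the Volterra system μᵢ(t) = aᵢ(t) + ∫₀ᵗ μ_{1-i}(t-u) fᵢ(u) du for i = 0, 1 and all t ≥ 0. Then μ₀(t) = 0 and μ₁(t) = 0 for all t ≥ 0 if and only if F̄₀(t) c̄₀(t) + h₀(t) f₀(t) = 0 and F̄₁(t) c̄₁(t) + h₁(t)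 f₁(t) = 0 for all t ≥ 0. -/
open MeasureTheory Set

/-- If a continuous function on `[0,∞)` has vanishing primitive, it vanishes. -/
lemma aux_eq_zero (g : ℝ → ℝ) (hg : ContinuousOn g (Set.Ici 0))
    (h : ∀ t ≥ (0:ℝ), (∫ u in (0:ℝ)..t, g u) = 0) : ∀ t ≥ (0:ℝ), g t = 0 := by
  intro t ht
  have hsub : Set.Ici t ⊆ Set.Ici (0:ℝ) := Set.Ici_subset_Ici.2 ht
  have hint : IntervalIntegrable g volume 0 t := by
    apply (hg.mono ?_).intervalIntegrable
    rw [Set.uIcc_of_le ht]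
    exact fun x hx => hx.1
  have hmeas : StronglyMeasurableAtFilter g (nhdsWithin t (Set.Ioi t)) volume :=
    ⟨Set.Ioi t, self_mem_nhdsWithin,
      ((hg.mono (fun x hx => le_trans ht (le_of_lt hx))).aestronglyMeasurable measurableSet_Ioi)⟩
  have hcw : ContinuousWithinAt g (Set.Ioi t) t :=
    ((hg t ht).mono hsub).mono Set.Ioi_subset_Ici_self
  have h1 : HasDerivWithinAt (fun x => ∫ u in (0:ℝ)..x, g u) (g t) (Set.Ici t) t :=
    intervalIntegral.integral_hasDerivWithinAt_right hint hmeas hcw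
  have h2 : HasDerivWithinAt (fun x => ∫ u in (0:ℝ)..x, g u) 0 (Set.Ici t) t := by
    refine (hasDerivWithinAt_const t (Set.Ici t) (0:ℝ)).congr ?_ ?_
    · intro x hx; exact h x (le_trans ht hx)
    · exact h t ht
  have := h1.derivWithin (uniqueDiffOn_Ici t t Set.self_mem_Ici)
  rw [h2.derivWithin (uniqueDiffOn_Ici t t Set.self_mem_Ici)] at this
  exact this.symm

/-- Continuity of the primitive on `[0,∞)` of a function integrable on `[0,∞)`. -/
lemma aux_primitive_cont (f : ℝ → ℝ) (hfi : IntegrableOn f (Set.Ici 0)) :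
    ContinuousOn (fun x => ∫ u in (0:ℝ)..x, f u) (Set.Ici 0) := by
  intro t ht
  have ht' : (0:ℝ) ≤ t := ht
  have h1 : ContinuousOn (fun x => ∫ u in (0:ℝ)..x, f u) (Set.Icc 0 (t+1)) := by
    have := intervalIntegral.continuousOn_primitive_interval
      (f := f) (μ := volume) (a := 0) (b := t+1) ?_
    · rwa [Set.uIcc_of_le (by linarith : (0:ℝ) ≤ t+1)] at this
    · rw [Set.uIcc_of_le (by linarith : (0:ℝ) ≤ t+1)]
      exact hfi.mono_set (fun x hx => hx.1)
  refine (h1 t ⟨ht, by linarith⟩).mono_of_mem_nhdsWithin ?_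
  have : Set.Icc 0 (t+1) = Set.Ici 0 ∩ Set.Iic (t+1) := (Set.Ici_inter_Iic).symm
  rw [this]
  exact Filter.inter_mem self_mem_nhdsWithin
    (mem_nhdsWithin_of_mem_nhds (Iic_mem_nhds (by linarith)))

/-- Survival function decomposition and continuity. -/
lemma aux_F_cont (f F : ℝ → ℝ) (hfi : IntegrableOn f (Set.Ici 0))
    (hF : ∀ t, F t = ∫ u in Set.Ioi t, f u) : ContinuousOn F (Set.Ici 0) := by
  have key : ∀ t ∈ Set.Ici (0:ℝ),
      F t = (∫ u in Set.Ioi (0:ℝ), f u) - ∫ u in (0:ℝ)..t, f u := by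
    intro t ht
    have hd : Disjoint (Set.Ioc 0 t) (Set.Ioi t) := Set.Ioc_disjoint_Ioi le_rfl
    have hu : Set.Ioc (0:ℝ) t ∪ Set.Ioi t = Set.Ioi 0 := Set.Ioc_union_Ioi_eq_Ioi ht
    have hi1 : IntegrableOn f (Set.Ioc 0 t) :=
      hfi.mono_set (fun x hx => le_of_lt hx.1)
    have hi2 : IntegrableOn f (Set.Ioi t) :=
      hfi.mono_set (fun x hx => Set.mem_Ici.2 (le_trans (Set.mem_Ici.1 ht) (le_of_lt hx)))
    have := setIntegral_union hd measurableSet_Ioi hi1 hi2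
    rw [hu] at this
    rw [hF t, this, intervalIntegral.integral_of_le ht]
    ring
  refine ContinuousOn.congr ?_ key
  exact (continuousOn_const).sub (aux_primitive_cont f hfi)

/-- Uniqueness for the homogeneous Volterra system. -/
lemma aux_unique (f0 f1 μ0 μ1 : ℝ → ℝ)
    (hf0nn : ∀ t, 0 ≤ f0 t) (hf1nn : ∀ t, 0 ≤ f1 t)
    (hf0c : ContinuousOn f0 (Set.Ici 0)) (hf1c : ContinuousOn f1 (Set.Ici 0))
    (hμ0c : ContinuousOn μ0 (Set.Ici 0)) (hμ1c : ContinuousOn μ1 (Set.Ici 0))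
    (h0 : ∀ t ≥ (0:ℝ), μ0 t = ∫ u in (0:ℝ)..t, μ1 (t - u) * f0 u)
    (h1 : ∀ t ≥ (0:ℝ), μ1 t = ∫ u in (0:ℝ)..t, μ0 (t - u) * f1 u) :
    ∀ t ≥ (0:ℝ), μ0 t = 0 ∧ μ1 t = 0 := by
  intro T hT
  set m : ℝ → ℝ := fun t => |μ0 t| + |μ1 t| with hm
  have hmc : ContinuousOn m (Set.Ici 0) := (hμ0c.abs).add (hμ1c.abs)
  have hmnn : ∀ t, 0 ≤ m t := fun t => add_nonneg (abs_nonneg _) (abs_nonneg _)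
  obtain ⟨K0, hK0⟩ := (isCompact_Icc :
    IsCompact (Set.Icc (0:ℝ) T)).exists_bound_of_continuousOn
    (hf0c.mono (Set.Icc_subset_Ici_self))
  obtain ⟨K1, hK1⟩ := (isCompact_Icc :
    IsCompact (Set.Icc (0:ℝ) T)).exists_bound_of_continuousOn
    (hf1c.mono (Set.Icc_subset_Ici_self))
  set K : ℝ := max (max K0 K1) 0 with hKdef
  have hKnn : 0 ≤ K := le_max_right _ _
  have hK : ∀ u ∈ Set.Icc (0:ℝ) T, f0 u ≤ K ∧ f1 u ≤ K := by
    intro u hu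
    constructor
    · exact le_trans (le_trans (le_abs_self _) (hK0 u hu))
        (le_trans (le_max_left _ _) (le_max_left _ _))
    · exact le_trans (le_trans (le_abs_self _) (hK1 u hu))
        (le_trans (le_max_right _ _) (le_max_left _ _))
  set G : ℝ → ℝ := fun x => ∫ u in (0:ℝ)..x, m u with hG
  have hmint : ∀ t ∈ Set.Icc (0:ℝ) T, IntervalIntegrable m volume 0 t := by
    intro t ht
    apply (hmc.mono ?_).intervalIntegrable
    rw [Set.uIcc_of_le ht.1]
    exact fun x hx => hx.1
  have hGnn : ∀ x ∈ Set.Icc (0:ℝ) T, 0 ≤ G x := by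
    intro x hx
    exact intervalIntegral.integral_nonneg hx.1 (fun u _ => hmnn u)
  -- key inequality
  have key : ∀ t ∈ Set.Icc (0:ℝ) T, m t ≤ (2*K) * G t := by
    intro t ht
    have hsub : Set.Icc (0:ℝ) t ⊆ Set.Ici 0 := fun x hx => hx.1
    have hmaps : ∀ u ∈ Set.Icc (0:ℝ) t, t - u ∈ Set.Icc (0:ℝ) t := by
      intro u hu
      exact ⟨by linarith [hu.2], by linarith [hu.1]⟩
    have hcomp0 : ContinuousOn (fun u => f0 (t - u)) (Set.Icc 0 t) := by
      refine ContinuousOn.comp (hf0c.mono hsub) ?_ hmaps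
      exact (continuous_const.sub continuous_id).continuousOn
    have hcomp1 : ContinuousOn (fun u => f1 (t - u)) (Set.Icc 0 t) := by
      refine ContinuousOn.comp (hf1c.mono hsub) ?_ hmaps
      exact (continuous_const.sub continuous_id).continuousOn
    -- change of variables
    have e0 : (∫ u in (0:ℝ)..t, μ1 (t - u) * f0 u)
        = ∫ u in (0:ℝ)..t, μ1 u * f0 (t - u) := by
      have := intervalIntegral.integral_comp_sub_left
        (a := (0:ℝ)) (b := t) (fun u => μ1 u * f0 (t - u)) t
      simp only [sub_sub_cancel, sub_zero, sub_self] at this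
      exact this
    have e1 : (∫ u in (0:ℝ)..t, μ0 (t - u) * f1 u)
        = ∫ u in (0:ℝ)..t, μ0 u * f1 (t - u) := by
      have := intervalIntegral.integral_comp_sub_left
        (a := (0:ℝ)) (b := t) (fun u => μ0 u * f1 (t - u)) t
      simp only [sub_sub_cancel, sub_zero, sub_self] at this
      exact this
    have httT : Set.Icc (0:ℝ) t ⊆ Set.Icc 0 T := Set.Icc_subset_Icc_right ht.2
    -- bound |μ0 t|
    have b0 : |μ0 t| ≤ K * G t := by
      rw [h0 t ht.1, e0]
      have hint1 : IntervalIntegrable (fun u => |μ1 u * f0 (t - u)|) volume 0 t := by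
        apply ContinuousOn.intervalIntegrable
        rw [Set.uIcc_of_le ht.1]
        exact ((hμ1c.mono hsub).mul hcomp0).abs
      have hint2 : IntervalIntegrable (fun u => K * m u) volume 0 t :=
        (hmint t ht).const_mul K
      calc |∫ u in (0:ℝ)..t, μ1 u * f0 (t - u)|
          ≤ ∫ u in (0:ℝ)..t, |μ1 u * f0 (t - u)| :=
            intervalIntegral.abs_integral_le_integral_abs ht.1
        _ ≤ ∫ u in (0:ℝ)..t, K * m u := by
            apply intervalIntegral.integral_mono_on ht.1 hint1 hint2
            intro u hu
            rw [abs_mul, abs_of_nonneg (hf0nn _)]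
            have h1' : |μ1 u| ≤ m u := le_add_of_nonneg_left (abs_nonneg _)
            have h2' : f0 (t - u) ≤ K := (hK _ (httT (hmaps u hu))).1
            calc |μ1 u| * f0 (t - u) ≤ m u * K :=
                  mul_le_mul h1' h2' (hf0nn _) (hmnn u)
              _ = K * m u := mul_comm _ _
        _ = K * G t := intervalIntegral.integral_const_mul K m
    have b1 : |μ1 t| ≤ K * G t := by
      rw [h1 t ht.1, e1]
      have hint1 : IntervalIntegrable (fun u => |μ0 u * f1 (t - u)|) volume 0 t := by
        apply ContinuousOn.intervalIntegrable
        rw [Set.uIcc_of_le ht.1]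
        exact ((hμ0c.mono hsub).mul hcomp1).abs
      have hint2 : IntervalIntegrable (fun u => K * m u) volume 0 t :=
        (hmint t ht).const_mul K
      calc |∫ u in (0:ℝ)..t, μ0 u * f1 (t - u)|
          ≤ ∫ u in (0:ℝ)..t, |μ0 u * f1 (t - u)| :=
            intervalIntegral.abs_integral_le_integral_abs ht.1
        _ ≤ ∫ u in (0:ℝ)..t, K * m u := by
            apply intervalIntegral.integral_mono_on ht.1 hint1 hint2
            intro u hu
            rw [abs_mul, abs_of_nonneg (hf1nn _)]
            have h1' : |μ0 u| ≤ m u := le_add_of_nonneg_right (abs_nonneg _)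
            have h2' : f1 (t - u) ≤ K := (hK _ (httT (hmaps u hu))).2
            calc |μ0 u| * f1 (t - u) ≤ m u * K :=
                  mul_le_mul h1' h2' (hf1nn _) (hmnn u)
              _ = K * m u := mul_comm _ _
        _ = K * G t := intervalIntegral.integral_const_mul K m
    calc m t = |μ0 t| + |μ1 t| := rfl
      _ ≤ K * G t + K * G t := add_le_add b0 b1
      _ = (2*K) * G t := by ring
  -- continuity of G on Icc 0 T
  have hGc : ContinuousOn G (Set.Icc 0 T) := by
    have := intervalIntegral.continuousOn_primitive_interval
      (f := m) (μ := volume) (a := 0) (b := T) ?_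
    · rwa [Set.uIcc_of_le hT] at this
    · rw [Set.uIcc_of_le hT]
      exact (hmc.mono Set.Icc_subset_Ici_self).integrableOn_Icc
  -- derivative of G
  have hGd : ∀ x ∈ Set.Ico (0:ℝ) T, HasDerivWithinAt G (m x) (Set.Ici x) x := by
    intro x hx
    have hsub : Set.Ici x ⊆ Set.Ici (0:ℝ) := Set.Ici_subset_Ici.2 hx.1
    refine intervalIntegral.integral_hasDerivWithinAt_right
      (hmint x ⟨hx.1, le_of_lt hx.2⟩)
      ⟨Set.Ioi x, self_mem_nhdsWithin,
        ((hmc.mono (fun y hy => le_trans hx.1 (le_of_lt hy))).aestronglyMeasurable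
          measurableSet_Ioi)⟩ ?_
    exact ((hmc x hx.1).mono hsub).mono Set.Ioi_subset_Ici_self
  -- Gronwall
  have hg := norm_le_gronwallBound_of_norm_deriv_right_le (f := G) (f' := m)
    (δ := 0) (K := 2*K) (ε := 0) (a := 0) (b := T) hGc hGd
    (by simp [hG, intervalIntegral.integral_same]) ?_
  · have hGT : G T = 0 := by
      have := hg T ⟨hT, le_refl T⟩
      rw [sub_zero, gronwallBound_ε0_δ0, Real.norm_eq_abs] at this
      exact abs_eq_zero.1 (le_antisymm this (abs_nonneg _))
    have hmT : m T = 0 := by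
      have := key T ⟨hT, le_refl T⟩
      rw [hGT, mul_zero] at this
      exact le_antisymm this (hmnn T)
    have hmT' : |μ0 T| + |μ1 T| = 0 := hmT
    constructor
    · have : |μ0 T| = 0 := by
        have := abs_nonneg (μ0 T); have := abs_nonneg (μ1 T); linarith
      exact abs_eq_zero.1 this
    · have : |μ1 T| = 0 := by
        have := abs_nonneg (μ0 T); have := abs_nonneg (μ1 T); linarith
      exact abs_eq_zero.1 this
  · intro x hx
    rw [Real.norm_eq_abs, Real.norm_eq_abs, abs_of_nonneg (hmnn x),
      abs_of_nonneg (hGnn x ⟨hx.1, le_of_lt hx.2⟩), add_zero]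
    exact key x ⟨hx.1, le_of_lt hx.2⟩

theorem mean_zero_iff_martingale_condition
    (f0 f1 : ℝ → ℝ)
    (hf0nn : ∀ t, 0 ≤ f0 t) (hf1nn : ∀ t, 0 ≤ f1 t)
    (hf0int : IntegrableOn f0 (Set.Ici 0)) (hf1int : IntegrableOn f1 (Set.Ici 0))
    (hf0c : ContinuousOn f0 (Set.Ici 0)) (hf1c : ContinuousOn f1 (Set.Ici 0))
    (c0 c1 h0 h1 : ℝ → ℝ)
    (hc0 : ContinuousOn c0 (Set.Ici 0)) (hc1 : ContinuousOn c1 (Set.Ici 0))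
    (hh0 : ContinuousOn h0 (Set.Ici 0)) (hh1 : ContinuousOn h1 (Set.Ici 0))
    (F0 F1 : ℝ → ℝ)
    (hF0 : ∀ t, F0 t = ∫ u in Set.Ioi t, f0 u) (hF1 : ∀ t, F1 t = ∫ u in Set.Ioi t, f1 u)
    (a0 a1 : ℝ → ℝ)
    (ha0 : ∀ t, a0 t = ∫ u in (0:ℝ)..t, (F0 u * c0 u + f0 u * h0 u))
    (ha1 : ∀ t, a1 t = ∫ u in (0:ℝ)..t, (F1 u * c1 u + f1 u * h1 u))
    (μ0 μ1 : ℝ → ℝ)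
    (hμ0c : ContinuousOn μ0 (Set.Ici 0)) (hμ1c : ContinuousOn μ1 (Set.Ici 0))
    (hμ0 : ∀ t ≥ (0:ℝ), μ0 t = a0 t + ∫ u in (0:ℝ)..t, μ1 (t - u) * f0 u)
    (hμ1 : ∀ t ≥ (0:ℝ), μ1 t = a1 t + ∫ u in (0:ℝ)..t, μ0 (t - u) * f1 u) :
    (∀ t ≥ (0:ℝ), μ0 t = 0 ∧ μ1 t = 0) ↔
      (∀ t ≥ (0:ℝ), F0 t * c0 t + h0 t * f0 t = 0 ∧ F1 t * c1 t + h1 t * f1 t = 0) := by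
  have hF0c : ContinuousOn F0 (Set.Ici 0) := aux_F_cont f0 F0 hf0int hF0
  have hF1c : ContinuousOn F1 (Set.Ici 0) := aux_F_cont f1 F1 hf1int hF1
  have hg0c : ContinuousOn (fun u => F0 u * c0 u + f0 u * h0 u) (Set.Ici 0) :=
    (hF0c.mul hc0).add (hf0c.mul hh0)
  have hg1c : ContinuousOn (fun u => F1 u * c1 u + f1 u * h1 u) (Set.Ici 0) :=
    (hF1c.mul hc1).add (hf1c.mul hh1)
  constructor
  · intro hz
    have hI0 : ∀ t ≥ (0:ℝ), (∫ u in (0:ℝ)..t, (F0 u * c0 u + f0 u * h0 u)) = 0 := by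
      intro t ht
      have hconv : (∫ u in (0:ℝ)..t, μ1 (t - u) * f0 u) = 0 := by
        rw [intervalIntegral.integral_congr (g := fun _ => (0:ℝ)) ?_,
          intervalIntegral.integral_zero]
        intro u hu
        rw [Set.uIcc_of_le ht] at hu
        have : t - u ≥ 0 := by linarith [hu.1, hu.2]
        simp [(hz _ this).2]
      have := hμ0 t ht
      rw [(hz t ht).1, ha0 t, hconv, add_zero] at this
      exact this.symm
    have hI1 : ∀ t ≥ (0:ℝ), (∫ u in (0:ℝ)..t, (F1 u * c1 u + f1 u * h1 u)) = 0 := by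
      intro t ht
      have hconv : (∫ u in (0:ℝ)..t, μ0 (t - u) * f1 u) = 0 := by
        rw [intervalIntegral.integral_congr (g := fun _ => (0:ℝ)) ?_,
          intervalIntegral.integral_zero]
        intro u hu
        rw [Set.uIcc_of_le ht] at hu
        have : t - u ≥ 0 := by linarith [hu.1, hu.2]
        simp [(hz _ this).1]
      have := hμ1 t ht
      rw [(hz t ht).2, ha1 t, hconv, add_zero] at this
      exact this.symm
    intro t ht
    have e0 := aux_eq_zero _ hg0c hI0 t ht
    have e1 := aux_eq_zero _ hg1c hI1 t ht
    constructor
    · rw [mul_comm (h0 t) (f0 t)]; exact e0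
    · rw [mul_comm (h1 t) (f1 t)]; exact e1
  · intro hz
    have ha0z : ∀ t ≥ (0:ℝ), a0 t = 0 := by
      intro t ht
      rw [ha0 t, intervalIntegral.integral_congr (g := fun _ => (0:ℝ)) ?_,
        intervalIntegral.integral_zero]
      intro u hu
      rw [Set.uIcc_of_le ht] at hu
      have := (hz u hu.1).1
      rw [mul_comm (h0 u) (f0 u)] at this
      simpa using this
    have ha1z : ∀ t ≥ (0:ℝ), a1 t = 0 := by
      intro t ht
      rw [ha1 t, intervalIntegral.integral_congr (g := fun _ => (0:ℝ)) ?_,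
        intervalIntegral.integral_zero]
      intro u hu
      rw [Set.uIcc_of_le ht] at hu
      have := (hz u hu.1).2
      rw [mul_comm (h1 u) (f1 u)] at this
      simpa using this
    refine aux_unique f0 f1 μ0 μ1 hf0nn hf1nn hf0c hf1c hμ0c hμ1c ?_ ?_
    · intro t ht
      rw [hμ0 t ht, ha0z t ht, zero_add]
    · intro t ht
      rw [hμ1 t ht, ha1z t ht, zero_add]
end

section
/- Let F̄ : [0,∞) → ℝ be continuously differentiable with F̄(s) > 0 for a fixed s ≥ 0, let f = -F̄', let c̄, h : [0,∞) → ℝ be continuous, and set l̄(t) = ∫₀ᵗ c̄(u) du. If F̄(u) c̄(u) + h(u) f(u) = 0 for all u ≥ 0, then for all t ≥ s the conditional forcing term a(t|s) = (F̄(t)/F̄(s)) l̄(t) + ∫ₛᵗ (l̄(u) + h(u)) (f(u)/F̄(s)) du is constant in t and equals l̄(s). -/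
open MeasureTheory

theorem conditional_forcing_constant
    (F f : ℝ → ℝ) (s : ℝ) (hs : 0 ≤ s) (hFs : 0 < F s)
    (hF : ∀ t ∈ Set.Ici (0:ℝ), HasDerivWithinAt F (-f t) (Set.Ici 0) t)
    (hfc : ContinuousOn f (Set.Ici 0))
    (c h : ℝ → ℝ) (hc : ContinuousOn c (Set.Ici 0)) (hh : ContinuousOn h (Set.Ici 0))
    (l : ℝ → ℝ) (hl : ∀ t, l t = ∫ u in (0:ℝ)..t, c u)
    (hmart : ∀ u ≥ (0:ℝ), F u * c u + h u * f u = 0) :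
    ∀ t ≥ s,
      (F t / F s) * l t + (∫ u in s..t, (l u + h u) * (f u / F s)) = l s := by
  intro t ht
  have h0t : (0:ℝ) ≤ t := hs.trans ht
  -- continuity of l on Ici 0
  have hlci : ContinuousOn l (Set.Ici 0) := by
    intro x hx
    have hx0 : (0:ℝ) ≤ x := hx
    have hcint : IntegrableOn c (Set.uIcc 0 (x+1)) volume := by
      rw [Set.uIcc_of_le (by linarith)]
      exact (hc.mono Set.Icc_subset_Ici_self).integrableOn_Icc
    have hcont : ContinuousOn l (Set.uIcc 0 (x+1)) :=
      (intervalIntegral.continuousOn_primitive_interval hcint).congr fun u _ => hl u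
    have hmem : Set.uIcc 0 (x+1) ∈ nhdsWithin x (Set.Ici 0) := by
      rw [Set.uIcc_of_le (by linarith)]
      have : Set.Icc 0 (x+1) = Set.Ici 0 ∩ Set.Iic (x+1) := by
        ext y; simp [Set.mem_Icc, and_comm]
      rw [this]
      exact Filter.inter_mem self_mem_nhdsWithin
        (nhdsWithin_le_nhds (Iic_mem_nhds (by linarith)))
    exact (hcont x (by rw [Set.uIcc_of_le (by linarith)]; exact ⟨hx0, by linarith⟩)).mono_of_mem_nhdsWithin hmem
  -- the integrand
  set φ : ℝ → ℝ := fun u => (l u + h u) * f u with hφ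
  have hφc : ContinuousOn φ (Set.Ici 0) := (hlci.add hh).mul hfc
  -- continuity of F on Ici 0
  have hFcont : ContinuousOn F (Set.Ici 0) := fun x hx => (hF x hx).continuousWithinAt
  -- the auxiliary function
  set g : ℝ → ℝ := fun x => F x * l x + ∫ u in s..x, φ u with hg
  have hIccsub : Set.Icc s t ⊆ Set.Ici (0:ℝ) := fun x hx => hs.trans hx.1
  -- continuity of g on Icc s t
  have hGint : IntegrableOn φ (Set.uIcc s t) volume := by
    rw [Set.uIcc_of_le ht]
    exact ((hφc.mono (fun x hx => hs.trans hx.1))).integrableOn_Icc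
  have hgcont : ContinuousOn g (Set.Icc s t) := by
    apply ContinuousOn.add
    · exact ((hFcont.mono hIccsub).mul (hlci.mono hIccsub))
    · have := intervalIntegral.continuousOn_primitive_interval hGint
      rwa [Set.uIcc_of_le ht] at this
  -- zero derivative on Ico s t
  have hderiv : ∀ x ∈ Set.Ico s t, HasDerivWithinAt g 0 (Set.Ici x) x := by
    intro x hx
    have hx0 : (0:ℝ) ≤ x := hs.trans hx.1
    have hsub : Set.Ici x ⊆ Set.Ici (0:ℝ) := Set.Ici_subset_Ici.mpr hx0
    have hF' : HasDerivWithinAt F (-f x) (Set.Ici x) x := (hF x hx0).mono hsub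
    -- derivative of l
    have hlint : IntervalIntegrable c volume 0 x := by
      apply (hc.mono ?_).intervalIntegrable
      rw [Set.uIcc_of_le hx0]; exact Set.Icc_subset_Ici_self
    have hsub' : Set.Ioi x ⊆ Set.Ici (0:ℝ) := Set.Ioi_subset_Ici_self.trans hsub
    have hcmeas : StronglyMeasurableAtFilter c (nhdsWithin x (Set.Ioi x)) volume :=
      ⟨Set.Ici 0, Filter.mem_of_superset self_mem_nhdsWithin hsub',
        hc.aestronglyMeasurable measurableSet_Ici⟩
    have hl0 : HasDerivWithinAt (fun u => ∫ v in (0:ℝ)..u, c v) (c x) (Set.Ici x) x :=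
      intervalIntegral.integral_hasDerivWithinAt_right hlint hcmeas ((hc x hx0).mono hsub')
    have hl' : HasDerivWithinAt l (c x) (Set.Ici x) x :=
      hl0.congr (fun u _ => hl u) (hl x)
    -- derivative of the integral term
    have hφint : IntervalIntegrable φ volume s x := by
      apply (hφc.mono ?_).intervalIntegrable
      rw [Set.uIcc_of_le hx.1]; exact fun y hy => hs.trans hy.1
    have hφmeas : StronglyMeasurableAtFilter φ (nhdsWithin x (Set.Ioi x)) volume :=
      ⟨Set.Ici 0, Filter.mem_of_superset self_mem_nhdsWithin hsub',
        hφc.aestronglyMeasurable measurableSet_Ici⟩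
    have hG' : HasDerivWithinAt (fun y => ∫ u in s..y, φ u) (φ x) (Set.Ici x) x :=
      intervalIntegral.integral_hasDerivWithinAt_right hφint hφmeas ((hφc x hx0).mono hsub')
    have hsum : HasDerivWithinAt g (-f x * l x + F x * c x + φ x) (Set.Ici x) x :=
      (hF'.mul hl').add hG'
    have hzero : -f x * l x + F x * c x + φ x = 0 := by
      have := hmart x hx0
      simp only [hφ]
      ring_nf
      ring_nf at this
      linarith
    rwa [hzero] at hsum
  -- g is constant
  have hgconst : g t = g s :=
    constant_of_has_deriv_right_zero hgcont hderiv t ⟨ht, le_refl t⟩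
  have hgs : g s = F s * l s := by
    simp [hg]
  -- conclude
  have key : F t * l t + (∫ u in s..t, φ u) = F s * l s := by
    rw [← hgs]; exact hgconst
  have hint_div : (∫ u in s..t, (l u + h u) * (f u / F s)) = (∫ u in s..t, φ u) / F s := by
    rw [← intervalIntegral.integral_div]
    congr 1; ext u; simp [hφ]; ring
  rw [hint_div]
  field_simp
  linarith [key]
end
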